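/- arXiv:2106.06984 — 4 statements merged into one kernel-verified Lean document; each statement's English description precedes it below -/
import Mathlib

section
/- For an Integrate-and-Fire neuron layer with soft reset run for T ≥ 1 time steps, if the initial potential v(0) is zero and the terminal potential satisfies 0 ≤ v(T)_i < V_th for coordinate i, then, writing s̄ = (1/T)·Σ_{t=1}^{T} s_in(t), the total output spike satisfies the sandwich inequality T·(W s̄)_i − V_th < Σ_{t=1}^{T} s_out(t)_i ≤ T·(W s̄)_i. -/
/-- For an IF neuron layer with soft reset run for `T ≥ 1` time steps, if the
initial potential `v(0)` is zero and the terminal potential satisfies `0 ≤ v(T)_i < V_th`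
for coordinate `i`, then with `s̄ = (1/T)·∑_{t=1}^{T} s_in(t)` the total output spike
satisfies `T·(W s̄)_i − V_th < ∑_{t=1}^{T} s_out(t)_i ≤ T·(W s̄)_i`. -/
theorem if_soft_reset_sandwich
    (p d T : ℕ) (hT : 1 ≤ T)
    (W : Matrix (Fin p) (Fin d) ℝ) (Vth : ℝ) (hVth : 0 < Vth)
    (sIn : ℕ → Fin d → ℝ) (sOut : ℕ → Fin p → ℝ) (v : ℕ → Fin p → ℝ)
    (hdyn : ∀ t, 1 ≤ t → t ≤ T →
      (∀ i, sOut t i =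
        if Vth ≤ v (t - 1) i + W.mulVec (sIn t) i then Vth else 0) ∧
      (∀ i, v t i = v (t - 1) i + W.mulVec (sIn t) i - sOut t i))
    (hv0 : v 0 = 0)
    (i : Fin p) (hvT : 0 ≤ v T i ∧ v T i < Vth) :
    (T : ℝ) * W.mulVec ((1 / (T : ℝ)) • ∑ t ∈ Finset.Icc 1 T, sIn t) i - Vth
        < ∑ t ∈ Finset.Icc 1 T, sOut t i ∧
      ∑ t ∈ Finset.Icc 1 T, sOut t i
        ≤ (T : ℝ) * W.mulVec ((1 / (T : ℝ)) • ∑ t ∈ Finset.Icc 1 T, sIn t) i := by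

  have hTpos : (0:ℝ) < T := by exact_mod_cast hT
  -- telescoping
  have key : ∀ n, n ≤ T → v n i = ∑ t ∈ Finset.Icc 1 n, (W.mulVec (sIn t) i - sOut t i) := by
    intro n hn
    induction n with
    | zero => simp [hv0]
    | succ m ih =>
      have hm : m ≤ T := Nat.le_of_succ_le hn
      rw [Finset.sum_Icc_succ_top (Nat.succ_le_succ (Nat.zero_le m)), ← ih hm]
      have := (hdyn (m+1) (Nat.succ_le_succ (Nat.zero_le m)) hn).2 i
      simp at this
      rw [this]; ring
  have hvT' := key T le_rfl
  rw [Finset.sum_sub_distrib] at hvT'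
  -- linearity of mulVec at coordinate i
  have hlin : (T : ℝ) * W.mulVec ((1 / (T : ℝ)) • ∑ t ∈ Finset.Icc 1 T, sIn t) i
      = ∑ t ∈ Finset.Icc 1 T, W.mulVec (sIn t) i := by
    rw [Matrix.mulVec_smul]
    have : W.mulVec (∑ t ∈ Finset.Icc 1 T, sIn t) i
        = ∑ t ∈ Finset.Icc 1 T, W.mulVec (sIn t) i := by
      induction (Finset.Icc 1 T) using Finset.induction with
      | empty => simp [Matrix.mulVec]
      | insert a s h ih =>
        rw [Finset.sum_insert h, Finset.sum_insert h, Matrix.mulVec_add, ← ih]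
        rfl
    rw [Pi.smul_apply, this, smul_eq_mul]
    field_simp
  rw [hlin]
  constructor
  · linarith [hvT.2, hvT']
  · linarith [hvT.1, hvT']
end

section
/- For an Integrate-and-Fire neuron layer with soft reset run for T ≥ 1 time steps, if the initial potential v(0) is zero and the terminal potential satisfies 0 ≤ v(T)_i < V_th for every coordinate i, then the average output spike s̄_out = (1/T)·Σ_{t=1}^{T} s_out(t) satisfies, for every coordinate i, s̄_out_i = (V_th/T)·min(max(⌊(T/V_th)·(W s̄_in)_i⌋, 0), T), where s̄_in = (1/T)·Σ_{t=1}^{T} s_in(t) and ⌊·⌋ is the integer floor. -/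
/-- For an IF neuron layer with soft reset run for `T ≥ 1` time steps, if
`v(0) = 0` and `0 ≤ v(T)_i < V_th` for every coordinate `i`, then the average output spike
`s̄_out = (1/T)·∑_{t=1}^{T} s_out(t)` satisfies, for every coordinate `i`,
`s̄_out_i = (V_th/T)·min(max(⌊(T/V_th)·(W s̄_in)_i⌋, 0), T)`, where
`s̄_in = (1/T)·∑_{t=1}^{T} s_in(t)`. -/
theorem if_soft_reset_avg_output_clipfloor
    (p d T : ℕ) (hT : 1 ≤ T)
    (W : Matrix (Fin p) (Fin d) ℝ) (Vth : ℝ) (hVth : 0 < Vth)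
    (sIn : ℕ → Fin d → ℝ) (sOut : ℕ → Fin p → ℝ) (v : ℕ → Fin p → ℝ)
    (hdyn : ∀ t, 1 ≤ t → t ≤ T →
      (∀ i, sOut t i =
        if Vth ≤ v (t - 1) i + W.mulVec (sIn t) i then Vth else 0) ∧
      (∀ i, v t i = v (t - 1) i + W.mulVec (sIn t) i - sOut t i))
    (hv0 : v 0 = 0)
    (hvT : ∀ i, 0 ≤ v T i ∧ v T i < Vth) :
    ∀ i : Fin p,
      (1 / (T : ℝ)) * ∑ t ∈ Finset.Icc 1 T, sOut t i
        = (Vth / (T : ℝ)) *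
          ((min (max ⌊((T : ℝ) / Vth) *
              W.mulVec ((1 / (T : ℝ)) • ∑ t ∈ Finset.Icc 1 T, sIn t) i⌋ 0)
            (T : ℤ) : ℤ) : ℝ) := by
  intro i
  have hTpos : (0:ℝ) < T := by exact_mod_cast hT
  -- telescoping
  have htel : ∀ n, n ≤ T →
      v n i = ∑ t ∈ Finset.Icc 1 n, (W.mulVec (sIn t) i - sOut t i) := by
    intro n hn
    induction n with
    | zero => simp [hv0]
    | succ m ih =>
      have hm : m ≤ T := Nat.le_of_succ_le hn
      have hd := (hdyn (m+1) (Nat.succ_le_succ (Nat.zero_le m)) hn).2 i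
      rw [Finset.sum_Icc_succ_top (Nat.succ_le_succ (Nat.zero_le m)), ← ih hm]
      simp at hd
      rw [hd]; ring
  -- spike values are 0 or Vth
  have hspike : ∀ t ∈ Finset.Icc 1 T, sOut t i = 0 ∨ sOut t i = Vth := by
    intro t ht
    simp only [Finset.mem_Icc] at ht
    have := (hdyn t ht.1 ht.2).1 i
    by_cases h : Vth ≤ v (t - 1) i + W.mulVec (sIn t) i
    · right; simp [this, h]
    · left; simp [this, h]
  -- sum of outputs = Vth * N
  set F := (Finset.Icc 1 T).filter (fun t => sOut t i = Vth) with hF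
  have hsum : ∑ t ∈ Finset.Icc 1 T, sOut t i = Vth * F.card := by
    rw [hF, Finset.card_filter]
    push_cast
    rw [Finset.mul_sum]
    apply Finset.sum_congr rfl
    intro t ht
    rcases hspike t ht with h | h
    · have hne : ¬ sOut t i = Vth := by rw [h]; exact ne_of_lt hVth
      simp [h, hne, ne_of_lt hVth]
    · simp [h]
  have hNle : F.card ≤ T := by
    calc F.card ≤ (Finset.Icc 1 T).card := Finset.card_filter_le _ _
    _ = T := by simp
  -- A = v T i + Vth * N
  have hA : ∑ t ∈ Finset.Icc 1 T, W.mulVec (sIn t) i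
      = v T i + Vth * F.card := by
    have := htel T le_rfl
    rw [Finset.sum_sub_distrib, hsum] at this
    linarith
  -- linearity of mulVec
  have hlin : W.mulVec ((1 / (T : ℝ)) • ∑ t ∈ Finset.Icc 1 T, sIn t) i
      = (1 / (T : ℝ)) * ∑ t ∈ Finset.Icc 1 T, W.mulVec (sIn t) i := by
    simp only [Matrix.mulVec, dotProduct, Pi.smul_apply, Finset.sum_apply,
      smul_eq_mul, Finset.mul_sum]
    rw [Finset.sum_comm]
    congr 1; ext j; congr 1; ext t; ring
  -- compute the floor
  have hfloor : ⌊((T : ℝ) / Vth) *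
      W.mulVec ((1 / (T : ℝ)) • ∑ t ∈ Finset.Icc 1 T, sIn t) i⌋ = (F.card : ℤ) := by
    rw [hlin, hA]
    have hx : ((T : ℝ) / Vth) * ((1 / (T : ℝ)) * (v T i + Vth * F.card))
        = (F.card : ℝ) + v T i / Vth := by
      field_simp
      ring
    rw [hx]
    have h1 : (0:ℝ) ≤ v T i / Vth := div_nonneg (hvT i).1 hVth.le
    have h2 : v T i / Vth < 1 := (div_lt_one hVth).2 (hvT i).2
    rw [show ((F.card : ℝ) + v T i / Vth) = v T i / Vth + ((F.card : ℤ) : ℝ) by push_cast; ring,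
      Int.floor_add_intCast]
    have : ⌊v T i / Vth⌋ = 0 := Int.floor_eq_zero_iff.2 ⟨h1, h2⟩
    omega
  rw [hfloor, hsum]
  have hmax : max ((F.card : ℤ)) 0 = (F.card : ℤ) := max_eq_left (Int.ofNat_nonneg _)
  have hmin : min ((F.card : ℤ)) (T : ℤ) = (F.card : ℤ) := min_eq_left (by exact_mod_cast hNle)
  rw [hmax, hmin]
  push_cast
  ring
end

section
/- For an Integrate-and-Fire neuron layer with soft reset run for T ≥ 1 time steps with arbitrary initial potential v(0), if the terminal potential satisfies 0 ≤ v(T)_i < V_th for coordinate i, then the total output spike count m_i (defined by Σ_{t=1}^{T} s_out(t)_i = m_i·V_th) satisfies T·(W s̄_in)_i + v(0)_i − V_th < m_i·V_th ≤ T·(W s̄_in)_i + v(0)_i, where s̄_in = (1/T)·Σ_{t=1}^{T} s_in(t). -/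
/-- For an IF neuron layer with soft reset run for `T ≥ 1` time steps with
arbitrary initial potential `v(0)`, if `0 ≤ v(T)_i < V_th` for coordinate `i`, then the
total output spike count `m_i` (defined by `∑_{t=1}^{T} s_out(t)_i = m_i·V_th`) satisfies
`T·(W s̄_in)_i + v(0)_i − V_th < m_i·V_th ≤ T·(W s̄_in)_i + v(0)_i`, where
`s̄_in = (1/T)·∑_{t=1}^{T} s_in(t)`. -/
theorem if_soft_reset_sandwich_with_initial_potential
    (p d T : ℕ) (hT : 1 ≤ T)
    (W : Matrix (Fin p) (Fin d) ℝ) (Vth : ℝ) (hVth : 0 < Vth)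
    (sIn : ℕ → Fin d → ℝ) (sOut : ℕ → Fin p → ℝ) (v : ℕ → Fin p → ℝ)
    (hdyn : ∀ t, 1 ≤ t → t ≤ T →
      (∀ i, sOut t i =
        if Vth ≤ v (t - 1) i + W.mulVec (sIn t) i then Vth else 0) ∧
      (∀ i, v t i = v (t - 1) i + W.mulVec (sIn t) i - sOut t i))
    (i : Fin p) (hvT : 0 ≤ v T i ∧ v T i < Vth)
    (m : ℕ) (hmi : ∑ t ∈ Finset.Icc 1 T, sOut t i = (m : ℝ) * Vth) :
    (T : ℝ) * W.mulVec ((1 / (T : ℝ)) • ∑ t ∈ Finset.Icc 1 T, sIn t) i + v 0 i - Vth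
        < (m : ℝ) * Vth ∧
      (m : ℝ) * Vth
        ≤ (T : ℝ) * W.mulVec ((1 / (T : ℝ)) • ∑ t ∈ Finset.Icc 1 T, sIn t) i + v 0 i := by
  have hT0 : (T : ℝ) ≠ 0 := by positivity
  -- linearity of mulVec
  have hlin : (T : ℝ) * W.mulVec ((1 / (T : ℝ)) • ∑ t ∈ Finset.Icc 1 T, sIn t) i
      = ∑ t ∈ Finset.Icc 1 T, W.mulVec (sIn t) i := by
    rw [Matrix.mulVec_smul]
    have : W.mulVec (∑ t ∈ Finset.Icc 1 T, sIn t) i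
        = ∑ t ∈ Finset.Icc 1 T, W.mulVec (sIn t) i := by
      induction (Finset.Icc 1 T) using Finset.induction with
      | empty => simp [Matrix.mulVec]
      | insert _ _ h ih =>
        rw [Finset.sum_insert h, Finset.sum_insert h, Matrix.mulVec_add, ← ih]
        rfl
    simp only [Pi.smul_apply, smul_eq_mul, this]
    field_simp
  -- telescoping
  have key : ∀ t, t ≤ T → v t i = v 0 i + ∑ s ∈ Finset.Icc 1 t,
      (W.mulVec (sIn s) i - sOut s i) := by
    intro t
    induction t with
    | zero => simp
    | succ n ih =>
      intro hn
      have h1 : v (n + 1) i = v n i + W.mulVec (sIn (n+1)) i - sOut (n+1) i := by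
        have := (hdyn (n+1) (Nat.le_add_left 1 n) hn).2 i
        simpa using this
      rw [h1, ih (Nat.le_of_succ_le hn),
        Finset.sum_Icc_succ_top (Nat.le_add_left 1 n)]
      ring
  have hkey := key T le_rfl
  rw [Finset.sum_sub_distrib, hmi] at hkey
  rw [hlin]
  constructor <;> nlinarith [hvT.1, hvT.2]
end

section
/- For an Integrate-and-Fire neuron layer with soft reset run for T ≥ 1 time steps with arbitrary initial potential v(0), if the terminal potential satisfies 0 ≤ v(T)_i < V_th for every coordinate i, then the average output spike s̄_out = (1/T)·Σ_{t=1}^{T} s_out(t) satisfies, for every coordinate i, s̄_out_i = (V_th/T)·min(max(⌊(T·(W s̄_in)_i + v(0)_i)/V_th⌋, 0), T), where s̄_in = (1/T)·Σ_{t=1}^{T} s_in(t) and ⌊·⌋ is the integer floor. -/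
/-- For an IF neuron layer with soft reset run for `T ≥ 1` time steps with
arbitrary initial potential `v(0)`, if `0 ≤ v(T)_i < V_th` for every coordinate `i`, then
the average output spike `s̄_out = (1/T)·∑_{t=1}^{T} s_out(t)` satisfies, for every
coordinate `i`,
`s̄_out_i = (V_th/T)·min(max(⌊(T·(W s̄_in)_i + v(0)_i)/V_th⌋, 0), T)`, where
`s̄_in = (1/T)·∑_{t=1}^{T} s_in(t)`. -/
theorem if_soft_reset_avg_output_clipfloor_with_initial_potential
    (p d T : ℕ) (hT : 1 ≤ T)
    (W : Matrix (Fin p) (Fin d) ℝ) (Vth : ℝ) (hVth : 0 < Vth)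
    (sIn : ℕ → Fin d → ℝ) (sOut : ℕ → Fin p → ℝ) (v : ℕ → Fin p → ℝ)
    (hdyn : ∀ t, 1 ≤ t → t ≤ T →
      (∀ i, sOut t i =
        if Vth ≤ v (t - 1) i + W.mulVec (sIn t) i then Vth else 0) ∧
      (∀ i, v t i = v (t - 1) i + W.mulVec (sIn t) i - sOut t i))
    (hvT : ∀ i, 0 ≤ v T i ∧ v T i < Vth) :
    ∀ i : Fin p,
      (1 / (T : ℝ)) * ∑ t ∈ Finset.Icc 1 T, sOut t i
        = (Vth / (T : ℝ)) *
          ((min (max ⌊((T : ℝ) *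
                W.mulVec ((1 / (T : ℝ)) • ∑ t ∈ Finset.Icc 1 T, sIn t) i
                + v 0 i) / Vth⌋ 0)
            (T : ℤ) : ℤ) : ℝ) := by
  intro i
  have hT0 : (0 : ℝ) < T := by exact_mod_cast hT
  -- telescoping: v n = v 0 + ∑ (input - output)
  have htel : ∀ n, n ≤ T →
      v n i = v 0 i + ∑ t ∈ Finset.Icc 1 n, (W.mulVec (sIn t) i - sOut t i) := by
    intro n hn
    induction n with
    | zero => simp
    | succ m ih =>
        have hm : m ≤ T := Nat.le_of_succ_le hn
        have hstep := (hdyn (m + 1) (Nat.le_add_left 1 m) hn).2 i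
        simp only [Nat.add_sub_cancel] at hstep
        rw [hstep, ih hm, Finset.sum_Icc_succ_top (by omega : 1 ≤ m + 1)]
        ring
  -- linearity of mulVec over the sum
  have hlin : W.mulVec ((1 / (T : ℝ)) • ∑ t ∈ Finset.Icc 1 T, sIn t) i
      = (1 / (T : ℝ)) * ∑ t ∈ Finset.Icc 1 T, W.mulVec (sIn t) i := by
    rw [Matrix.mulVec_smul]
    have h : W.mulVecLin (∑ t ∈ Finset.Icc 1 T, sIn t)
        = ∑ t ∈ Finset.Icc 1 T, W.mulVecLin (sIn t) :=
      map_sum W.mulVecLin sIn (Finset.Icc 1 T)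
    simp only [Matrix.mulVecLin_apply] at h
    simp [h, Finset.sum_apply, smul_eq_mul]
  -- spike count
  set N : ℕ := ((Finset.Icc 1 T).filter
      (fun t => Vth ≤ v (t - 1) i + W.mulVec (sIn t) i)).card with hN
  have hsum : ∑ t ∈ Finset.Icc 1 T, sOut t i = Vth * N := by
    rw [Finset.sum_congr rfl (fun t ht => by
      have hmem := Finset.mem_Icc.mp ht
      exact (hdyn t hmem.1 hmem.2).1 i)]
    rw [Finset.sum_ite, Finset.sum_const, Finset.sum_const]
    simp only [smul_eq_mul, Nat.smul_one_eq_cast, hN]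
    ring
  have hNT : N ≤ T := by
    calc N ≤ (Finset.Icc 1 T).card := Finset.card_filter_le _ _
    _ = T := by simp
  -- key identity
  have hkey : (T : ℝ) * W.mulVec ((1 / (T : ℝ)) • ∑ t ∈ Finset.Icc 1 T, sIn t) i
      + v 0 i = Vth * N + v T i := by
    rw [hlin, htel T le_rfl, Finset.sum_sub_distrib, hsum]
    field_simp
    ring
  have hvT0 := (hvT i).1
  have hvT1 := (hvT i).2
  have hfloor : ⌊((T : ℝ) * W.mulVec ((1 / (T : ℝ)) • ∑ t ∈ Finset.Icc 1 T, sIn t) i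
      + v 0 i) / Vth⌋ = (N : ℤ) := by
    rw [hkey]
    have : (Vth * N + v T i) / Vth = (N : ℝ) + v T i / Vth := by
      field_simp
    rw [this]
    have h0 : ⌊v T i / Vth⌋ = 0 := by
      rw [Int.floor_eq_zero_iff]
      constructor
      · positivity
      · rw [div_lt_one hVth]; exact hvT1
    rw [show ((N : ℝ)) = ((N : ℤ) : ℝ) by push_cast; ring, Int.floor_intCast_add, h0, add_zero]
  rw [hfloor, hsum]
  rw [max_eq_left (by positivity), min_eq_left (by exact_mod_cast hNT)]
  push_cast
  ring
end
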